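/- arXiv:1901.10443 — 3 statements merged into one kernel-verified Lean document; each statement's English description precedes it below -/
import Mathlib

section
/- Suppose F: ℝⁿ → ℝ is concave and differentiable, and consider one step of gradient ascent-descent with normal update: if ⟨∇_w L_F(w_t), ∇_w L_C(w_t)⟩ > ‖∇_u L_F(u_t)‖² + α‖∇_w L_F(w_t)‖², where u_{t+1} = u_t + η∇_u L_F and w_{t+1} = w_t - η(∇_w L_C - α∇_w L_F) with 0 < η ≤ 1, then L_F(w_{t+1}, u_{t+1}) < L_F(w_t, u_t). -/
open RealInnerProductSpace

private lemma inner_gradient_eq {E : Type*} [NormedAddCommGroup E] [InnerProductSpace ℝ E]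
    [CompleteSpace E] (f : E → ℝ) (x a : E) :
    ⟪gradient f x, a⟫ = fderiv ℝ f x a := by
  rw [gradient]
  exact InnerProductSpace.toDual_symm_apply

theorem stmt3 {m n : ℕ}
    (LF : EuclideanSpace ℝ (Fin m) → EuclideanSpace ℝ (Fin n) → ℝ)
    (LC : EuclideanSpace ℝ (Fin n) → ℝ)
    (hconc : ConcaveOn ℝ Set.univ
      (fun p : EuclideanSpace ℝ (Fin m) × EuclideanSpace ℝ (Fin n) => LF p.1 p.2))
    (hdiff : Differentiable ℝ
      (fun p : EuclideanSpace ℝ (Fin m) × EuclideanSpace ℝ (Fin n) => LF p.1 p.2))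
    (hdiffC : Differentiable ℝ LC)
    (u : EuclideanSpace ℝ (Fin m)) (w : EuclideanSpace ℝ (Fin n)) (η α : ℝ)
    (hη : 0 < η) (hη1 : η ≤ 1)
    (hgap : ⟪gradient (fun w' => LF u w') w, gradient LC w⟫ >
      ‖gradient (fun u' => LF u' w) u‖ ^ 2 + α * ‖gradient (fun w' => LF u w') w‖ ^ 2) :
    LF (u + η • gradient (fun u' => LF u' w) u)
        (w - η • (gradient LC w - α • gradient (fun w' => LF u w') w)) < LF u w := by
  let E1 := EuclideanSpace ℝ (Fin m)
  let E2 := EuclideanSpace ℝ (Fin n)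
  show LF (u + η • gradient (fun u' => LF u' w) u)
      (w - η • (gradient LC w - α • gradient (fun w' => LF u w') w)) < LF u w
  set Gu := gradient (fun u' => LF u' w) u with hGu
  set Gw := gradient (fun w' => LF u w') w with hGw
  set Gc := gradient LC w with hGc
  set a : E1 := η • Gu with ha
  set b : E2 := -(η • (Gc - α • Gw)) with hb
  set J : E1 × E2 → ℝ := fun p => LF p.1 p.2 with hJ
  set p₀ : E1 × E2 := (u, w) with hp₀
  set D := fderiv ℝ J p₀ with hD
  -- curve
  set c : ℝ → E1 × E2 := fun t => (u + t • a, w + t • b) with hc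
  have hc0 : c 0 = p₀ := by simp [hc, hp₀]
  have hcderiv : ∀ t : ℝ, HasDerivAt c (a, b) t := by
    intro t
    have := (((hasDerivAt_id t).smul_const a).const_add u).prodMk
      (((hasDerivAt_id t).smul_const b).const_add w)
    simpa [hc] using this
  set φ : ℝ → ℝ := fun t => J (c t) with hφ
  -- derivative of φ at 0
  have hφd : HasDerivAt φ (D (a, b)) 0 := by
    have h := (hdiff (c 0)).hasFDerivAt.comp_hasDerivAt 0 (hcderiv 0)
    rw [hc0] at h
    exact h
  -- partial fderivs
  have hinl : HasFDerivAt (fun u' : E1 => (u', w))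
      ((ContinuousLinearMap.id ℝ E1).prod 0) u :=
    (hasFDerivAt_id u).prodMk (hasFDerivAt_const w u)
  have hinr : HasFDerivAt (fun w' : E2 => (u, w'))
      ((0 : E2 →L[ℝ] E1).prod (ContinuousLinearMap.id ℝ E2)) w := by
    exact (hasFDerivAt_const u w).prodMk (hasFDerivAt_id w)
  have hpart1 : HasFDerivAt (fun u' : E1 => LF u' w)
      (D.comp ((ContinuousLinearMap.id ℝ E1).prod 0)) u := by
    have := ((hdiff p₀).hasFDerivAt).comp u hinl
    exact this
  have hpart2 : HasFDerivAt (fun w' : E2 => LF u w')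
      (D.comp ((0 : E2 →L[ℝ] E1).prod (ContinuousLinearMap.id ℝ E2))) w := by
    have := ((hdiff p₀).hasFDerivAt).comp w hinr
    exact this
  have hGua : ∀ x : E1, ⟪Gu, x⟫ = D (x, 0) := by
    intro x
    rw [hGu, inner_gradient_eq, hpart1.fderiv]
    simp
    rfl
  have hGwb : ∀ y : E2, ⟪Gw, y⟫ = D (0, y) := by
    intro y
    rw [hGw, inner_gradient_eq, hpart2.fderiv]
    simp
    rfl
  have hDab : D (a, b) = ⟪Gu, a⟫ + ⟪Gw, b⟫ := by
    rw [hGua, hGwb]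
    have : (a, b) = ((a, 0) : E1 × E2) + (0, b) := by simp
    rw [this, map_add]
  -- the derivative is negative
  have hGcw : ⟪Gw, Gc⟫ = ⟪Gc, Gw⟫ := real_inner_comm _ _
  have hval : D (a, b) = η * (‖Gu‖ ^ 2 + α * ‖Gw‖ ^ 2 - ⟪Gw, Gc⟫) := by
    rw [hDab, ha, hb]
    rw [real_inner_smul_right, real_inner_self_eq_norm_sq]
    rw [inner_neg_right, real_inner_smul_right, inner_sub_right,
      real_inner_smul_right, real_inner_self_eq_norm_sq]
    ring
  have hneg : D (a, b) < 0 := by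
    rw [hval]
    have h2 : ‖Gu‖ ^ 2 + α * ‖Gw‖ ^ 2 - ⟪Gw, Gc⟫ < 0 := by linarith [hgap]
    exact mul_neg_of_pos_of_neg hη h2
  -- concavity of φ
  have hφconc : ConcaveOn ℝ Set.univ φ := by
    have haff : ConcaveOn ℝ ((AffineMap.lineMap p₀ (p₀ + (a, b)) : ℝ →ᵃ[ℝ] E1 × E2) ⁻¹' Set.univ)
        (J ∘ (AffineMap.lineMap p₀ (p₀ + (a, b)) : ℝ →ᵃ[ℝ] E1 × E2)) :=
      hconc.comp_affineMap _
    have heq : (J ∘ (AffineMap.lineMap p₀ (p₀ + (a, b)) : ℝ →ᵃ[ℝ] E1 × E2)) = φ := by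
      funext t
      simp only [Function.comp_apply, AffineMap.lineMap_apply, hφ, hc, hp₀]
      congr 1
      simp [Prod.ext_iff, Prod.smul_mk]
      constructor <;> abel
    rw [heq, Set.preimage_univ] at haff
    exact haff
  -- tangent line above graph: slope φ 0 1 ≤ φ'(0)
  have hslope : φ 1 - φ 0 ≤ D (a, b) := by
    have := hφconc.neg.le_slope_of_hasDerivAt (Set.mem_univ (0 : ℝ)) (Set.mem_univ (1 : ℝ))
      zero_lt_one hφd.neg
    rw [slope_def_field] at this
    simp at this
    linarith
  have hfin : φ 1 < φ 0 := by linarith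
  have hφ0 : φ 0 = LF u w := by simp [hφ, hc, hJ]
  have hφ1 : φ 1 = LF (u + η • Gu) (w - η • (Gc - α • Gw)) := by
    simp only [hφ, hc, hJ, one_smul, ha, hb]
    rw [← sub_eq_add_neg]
  rw [← hφ0, ← hφ1]
  exact hfin
end

section
/- Suppose -L_F is convex and L-smooth in (u,w) jointly, the gradients satisfy the bounded-gradient condition ‖∇_w L_C(w)‖ ≤ G‖∇_w L_F(w)‖, and at each step the updates are u_{t+1} = u_t + η₁∇_u L_F, w_{t+1} = w_t - η₂(∇_w L_C - α∇_w L_F - Π_{∇_w L_F}∇_w L_C) with η₁ = 1/(2L) and η₂ = α/(2L(1+G²)) for some α ∈ (0,1]. Then L_F(w_{t+1}, u_{t+1}) - L_F(w_t, u_t) ≥ (α²/(4L(1+G²)))·(‖∇_u L_F(w_t,u_t)‖² + ‖∇_w L_F(w_t,u_t)‖²). -/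
/-!
A Lipschitz gradient controls `f` along any step `y - x`, by the mean value inequality:
`f y ≥ f x + ⟪∇f x, y - x⟫ - L‖y - x‖²`. The modified `w`-direction
`d = (∇L_C - Π ∇L_C) - α ∇_w L_F` satisfies `⟪∇_w L_F, d⟫ = -α‖∇_w L_F‖²`, because the projection
residual is orthogonal to `∇_w L_F`, and `‖d‖² ≤ (G² + α²)‖∇_w L_F‖²` by Pythagoras and the
bounded-gradient condition. With `η₁ = 1/(2L)` and `η₂ = α/(2L(1 + G²))` the first-order gain of
the step then exceeds the quadratic loss by `α²/(4L(1 + G²))` times the squared gradient norms.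
-/

open RealInnerProductSpace InnerProductSpace WithLp
open scoped Gradient

section Descent

variable {H : Type*} [NormedAddCommGroup H] [InnerProductSpace ℝ H] [CompleteSpace H]

theorem add_inner_gradient_sub_le_of_lipschitz_gradient {f : H → ℝ} {L : ℝ} (hL : 0 ≤ L)
    (hf : Differentiable ℝ f) (hlip : ∀ p q, ‖∇ f p - ∇ f q‖ ≤ L * ‖p - q‖) (x y : H) :
    f x + ⟪∇ f x, y - x⟫ - L * ‖y - x‖ ^ 2 ≤ f y := by
  have hbound : ∀ z ∈ segment ℝ x y, ‖fderiv ℝ f z - fderiv ℝ f x‖ ≤ L * ‖y - x‖ := by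
    intro z hz
    rw [← toDual_gradient, ← toDual_gradient, ← map_sub, LinearIsometryEquiv.norm_map]
    calc ‖∇ f z - ∇ f x‖ ≤ L * ‖z - x‖ := hlip z x
      _ ≤ L * ‖y - x‖ := by
        gcongr
        exact norm_sub_le_of_mem_segment hz
  have hmvt := (convex_segment x y).norm_image_sub_le_of_norm_hasFDerivWithin_le'
    (fun z _ => (hf z).hasFDerivAt.hasFDerivWithinAt) hbound
    (left_mem_segment ℝ x y) (right_mem_segment ℝ x y)
  rw [← toDual_gradient, toDual_apply_apply, Real.norm_eq_abs] at hmvt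
  nlinarith [neg_abs_le (f y - f x - ⟪∇ f x, y - x⟫)]

end Descent

section Product

variable {E F : Type*} [NormedAddCommGroup E] [InnerProductSpace ℝ E] [CompleteSpace E]
  [NormedAddCommGroup F] [InnerProductSpace ℝ F] [CompleteSpace F]

theorem hasGradientAt_toLp_left {f : WithLp 2 (E × F) → ℝ} {u : E} {w : F}
    (hf : DifferentiableAt ℝ f (toLp 2 (u, w))) :
    HasGradientAt (fun u' => f (toLp 2 (u', w))) (∇ f (toLp 2 (u, w))).fst u := by
  have hemb := (prodContinuousLinearEquiv 2 ℝ E F).symm.hasFDerivAt.comp u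
    (hasFDerivAt_prodMk_left u w)
  refine hasGradientAt_iff_hasFDerivAt.2 ((hf.hasFDerivAt.comp u hemb).congr_fderiv ?_)
  ext du
  simp only [ContinuousLinearMap.comp_apply, ContinuousLinearMap.inl_apply,
    ← toDual_gradient, toDual_apply_apply, prod_inner_apply]
  simp

theorem hasGradientAt_toLp_right {f : WithLp 2 (E × F) → ℝ} {u : E} {w : F}
    (hf : DifferentiableAt ℝ f (toLp 2 (u, w))) :
    HasGradientAt (fun w' => f (toLp 2 (u, w'))) (∇ f (toLp 2 (u, w))).snd w := by
  have hemb := (prodContinuousLinearEquiv 2 ℝ E F).symm.hasFDerivAt.comp w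
    (hasFDerivAt_prodMk_right u w)
  refine hasGradientAt_iff_hasFDerivAt.2 ((hf.hasFDerivAt.comp w hemb).congr_fderiv ?_)
  ext dw
  simp only [ContinuousLinearMap.comp_apply, ContinuousLinearMap.inr_apply,
    ← toDual_gradient, toDual_apply_apply, prod_inner_apply]
  simp

theorem add_inner_partial_gradients_sub_le {f : E → F → ℝ} {L : ℝ} (hL : 0 ≤ L)
    (hf : Differentiable ℝ (fun p : WithLp 2 (E × F) => f p.fst p.snd))
    (hlip : ∀ p q, ‖∇ (fun r : WithLp 2 (E × F) => f r.fst r.snd) p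
      - ∇ (fun r : WithLp 2 (E × F) => f r.fst r.snd) q‖ ≤ L * ‖p - q‖)
    (u u' : E) (w w' : F) :
    f u w + ⟪∇ (fun x => f x w) u, u' - u⟫ + ⟪∇ (fun y => f u y) w, w' - w⟫
        - L * (‖u' - u‖ ^ 2 + ‖w' - w‖ ^ 2) ≤ f u' w' := by
  set g := ∇ (fun r : WithLp 2 (E × F) => f r.fst r.snd) (toLp 2 (u, w))
  have hu : ∇ (fun x => f x w) u = g.fst := (hasGradientAt_toLp_left (hf _)).gradient
  have hw : ∇ (fun y => f u y) w = g.snd := (hasGradientAt_toLp_right (hf _)).gradient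
  have h := add_inner_gradient_sub_le_of_lipschitz_gradient hL hf hlip
    (toLp 2 (u, w)) (toLp 2 (u', w'))
  rw [← toLp_sub, Prod.mk_sub_mk, prod_inner_apply, prod_norm_sq_eq_of_L2] at h
  rw [hu, hw]
  simpa [add_assoc] using h

end Product

section Projection

variable {F : Type*} [NormedAddCommGroup F] [InnerProductSpace ℝ F]

/-- The paper's `Π_v u`; for `v = 0` it is `0`, since `⟪v, v⟫⁻¹ = 0`. -/
noncomputable def projOnto (v u : F) : F := (⟪u, v⟫ / ⟪v, v⟫) • v

theorem inner_sub_projOnto (v u : F) : ⟪v, u - projOnto v u⟫ = 0 := by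
  rcases eq_or_ne v 0 with rfl | hv
  · simp
  rw [projOnto, inner_sub_right, real_inner_smul_right, real_inner_comm,
    div_mul_cancel₀ _ (inner_self_ne_zero.2 hv), sub_self]

theorem norm_sub_projOnto_sq_le (v u : F) : ‖u - projOnto v u‖ ^ 2 ≤ ‖u‖ ^ 2 := by
  have horth : ⟪u - projOnto v u, projOnto v u⟫ = 0 := by
    nth_rw 2 [projOnto]
    rw [real_inner_smul_right, real_inner_comm v (u - projOnto v u), inner_sub_projOnto, mul_zero]
  have h := norm_add_sq_real (u - projOnto v u) (projOnto v u)
  rw [sub_add_cancel, horth] at h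
  nlinarith [sq_nonneg ‖projOnto v u‖]

theorem inner_sub_smul_sub_projOnto (α : ℝ) (g c : F) :
    ⟪g, c - α • g - projOnto g c⟫ = -(α * ‖g‖ ^ 2) := by
  rw [sub_right_comm, inner_sub_right, inner_sub_projOnto, real_inner_smul_right,
    real_inner_self_eq_norm_sq, zero_sub]

theorem norm_sub_smul_sub_projOnto_sq_le (α : ℝ) (g c : F) :
    ‖c - α • g - projOnto g c‖ ^ 2 ≤ ‖c‖ ^ 2 + α ^ 2 * ‖g‖ ^ 2 := by
  rw [sub_right_comm, norm_sub_sq_real, real_inner_smul_right, real_inner_comm,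
    inner_sub_projOnto, norm_smul, Real.norm_eq_abs, mul_pow, sq_abs]
  linarith [norm_sub_projOnto_sq_le g c]

end Projection

theorem stepsize_gain_le {L G α a b V : ℝ} (hL : 0 < L) (hα : α ^ 2 ≤ 1) (ha : 0 ≤ a) (hb : 0 ≤ b)
    (hV : V ≤ (G ^ 2 + α ^ 2) * b) :
    α ^ 2 / (4 * L * (1 + G ^ 2)) * (a + b)
      ≤ 1 / (2 * L) * a + α / (2 * L * (1 + G ^ 2)) * (α * b)
        - L * ((1 / (2 * L)) ^ 2 * a + (α / (2 * L * (1 + G ^ 2))) ^ 2 * V) := by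
  have hK : 0 < 1 + G ^ 2 := by positivity
  rw [← sub_nonneg]
  have h : 1 / (2 * L) * a + α / (2 * L * (1 + G ^ 2)) * (α * b)
        - L * ((1 / (2 * L)) ^ 2 * a + (α / (2 * L * (1 + G ^ 2))) ^ 2 * V)
        - α ^ 2 / (4 * L * (1 + G ^ 2)) * (a + b)
      = ((1 + G ^ 2 - α ^ 2) * (1 + G ^ 2) * a + α ^ 2 * ((1 + G ^ 2) * b - V))
          / (4 * L * (1 + G ^ 2) ^ 2) := by
    field_simp
    ring
  rw [h]
  apply div_nonneg _ (by positivity)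
  have h1 : 0 ≤ 1 + G ^ 2 - α ^ 2 := by nlinarith [sq_nonneg G]
  have h2 : 0 ≤ (1 + G ^ 2) * b - V := by nlinarith
  positivity

theorem stmt6_general {m n : ℕ}
    (LF : EuclideanSpace ℝ (Fin m) → EuclideanSpace ℝ (Fin n) → ℝ)
    (LC : EuclideanSpace ℝ (Fin n) → ℝ) (L G α : ℝ)
    (hL : 0 < L) (hα : 0 < α) (hα1 : α ≤ 1)
    (hdiff : Differentiable ℝ
      (fun p : WithLp 2 (EuclideanSpace ℝ (Fin m) × EuclideanSpace ℝ (Fin n)) =>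
        LF ((WithLp.equiv 2 _) p).1 ((WithLp.equiv 2 _) p).2))
    (hsmooth : ∀ p q : WithLp 2 (EuclideanSpace ℝ (Fin m) × EuclideanSpace ℝ (Fin n)),
      ‖gradient (fun r : WithLp 2 (EuclideanSpace ℝ (Fin m) × EuclideanSpace ℝ (Fin n)) =>
            LF ((WithLp.equiv 2 _) r).1 ((WithLp.equiv 2 _) r).2) p
        - gradient (fun r : WithLp 2 (EuclideanSpace ℝ (Fin m) × EuclideanSpace ℝ (Fin n)) =>
            LF ((WithLp.equiv 2 _) r).1 ((WithLp.equiv 2 _) r).2) q‖ ≤ L * ‖p - q‖)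
    (hbound : ∀ (u : EuclideanSpace ℝ (Fin m)) (w : EuclideanSpace ℝ (Fin n)),
      ‖gradient LC w‖ ≤ G * ‖gradient (fun w' => LF u w') w‖)
    (u : EuclideanSpace ℝ (Fin m)) (w : EuclideanSpace ℝ (Fin n)) :
    LF (u + (1 / (2 * L)) • gradient (fun u' => LF u' w) u)
        (w - (α / (2 * L * (1 + G ^ 2))) •
          (gradient LC w - α • gradient (fun w' => LF u w') w -
            (⟪gradient LC w, gradient (fun w' => LF u w') w⟫ /
                ⟪gradient (fun w' => LF u w') w, gradient (fun w' => LF u w') w⟫) •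
              gradient (fun w' => LF u w') w))
      - LF u w
      ≥ α ^ 2 / (4 * L * (1 + G ^ 2)) *
        (‖gradient (fun u' => LF u' w) u‖ ^ 2 + ‖gradient (fun w' => LF u w') w‖ ^ 2) := by
  set gu := ∇ (fun u' => LF u' w) u
  set gw := ∇ (fun w' => LF u w') w
  set gc := ∇ LC w
  rw [show (⟪gc, gw⟫ / ⟪gw, gw⟫) • gw = projOnto gw gc from rfl]
  have hstep := add_inner_partial_gradients_sub_le hL.le hdiff hsmooth u
    (u + (1 / (2 * L)) • gu) w (w - (α / (2 * L * (1 + G ^ 2))) • (gc - α • gw - projOnto gw gc))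
  rw [add_sub_cancel_left, sub_sub_cancel_left, inner_neg_right, real_inner_smul_right,
    real_inner_smul_right, inner_sub_smul_sub_projOnto, real_inner_self_eq_norm_sq, norm_neg,
    norm_smul, norm_smul, mul_pow, mul_pow, Real.norm_eq_abs, Real.norm_eq_abs, sq_abs, sq_abs]
    at hstep
  have hgc : ‖gc‖ ^ 2 ≤ G ^ 2 * ‖gw‖ ^ 2 := by
    rw [← mul_pow]
    exact pow_le_pow_left₀ (norm_nonneg _) (hbound u w) 2
  have hdir : ‖gc - α • gw - projOnto gw gc‖ ^ 2 ≤ (G ^ 2 + α ^ 2) * ‖gw‖ ^ 2 := by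
    linarith [norm_sub_smul_sub_projOnto_sq_le α gw gc]
  have hgain := stepsize_gain_le hL (by nlinarith) (sq_nonneg ‖gu‖) (sq_nonneg ‖gw‖) hdir
  linarith

theorem stmt6 {m n : ℕ}
    (LF : EuclideanSpace ℝ (Fin m) → EuclideanSpace ℝ (Fin n) → ℝ)
    (LC : EuclideanSpace ℝ (Fin n) → ℝ) (L G α : ℝ)
    (hL : 0 < L) (hG : 0 < G) (hα : 0 < α) (hα1 : α ≤ 1)
    (hconv : ConvexOn ℝ Set.univ
      (fun p : WithLp 2 (EuclideanSpace ℝ (Fin m) × EuclideanSpace ℝ (Fin n)) =>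
        -(LF ((WithLp.equiv 2 _) p).1 ((WithLp.equiv 2 _) p).2)))
    (hdiff : Differentiable ℝ
      (fun p : WithLp 2 (EuclideanSpace ℝ (Fin m) × EuclideanSpace ℝ (Fin n)) =>
        LF ((WithLp.equiv 2 _) p).1 ((WithLp.equiv 2 _) p).2))
    (hsmooth : ∀ p q : WithLp 2 (EuclideanSpace ℝ (Fin m) × EuclideanSpace ℝ (Fin n)),
      ‖gradient (fun r : WithLp 2 (EuclideanSpace ℝ (Fin m) × EuclideanSpace ℝ (Fin n)) =>
            LF ((WithLp.equiv 2 _) r).1 ((WithLp.equiv 2 _) r).2) p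
        - gradient (fun r : WithLp 2 (EuclideanSpace ℝ (Fin m) × EuclideanSpace ℝ (Fin n)) =>
            LF ((WithLp.equiv 2 _) r).1 ((WithLp.equiv 2 _) r).2) q‖ ≤ L * ‖p - q‖)
    (hdiffC : Differentiable ℝ LC)
    (hbound : ∀ (u : EuclideanSpace ℝ (Fin m)) (w : EuclideanSpace ℝ (Fin n)),
      ‖gradient LC w‖ ≤ G * ‖gradient (fun w' => LF u w') w‖)
    (u : EuclideanSpace ℝ (Fin m)) (w : EuclideanSpace ℝ (Fin n))
    (hne : gradient (fun w' => LF u w') w ≠ 0) :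
    LF (u + (1 / (2 * L)) • gradient (fun u' => LF u' w) u)
        (w - (α / (2 * L * (1 + G ^ 2))) •
          (gradient LC w - α • gradient (fun w' => LF u w') w -
            (⟪gradient LC w, gradient (fun w' => LF u w') w⟫ /
                ⟪gradient (fun w' => LF u w') w, gradient (fun w' => LF u w') w⟫) •
              gradient (fun w' => LF u w') w))
      - LF u w
      ≥ α ^ 2 / (4 * L * (1 + G ^ 2)) *
        (‖gradient (fun u' => LF u' w) u‖ ^ 2 + ‖gradient (fun w' => LF u w') w‖ ^ 2) :=
  stmt6_general LF LC L G α hL hα hα1 hdiff hsmooth hbound u w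
end

section
/- Let f : ℝⁿ → ℝ be convex, L-smooth, with minimizer w*, and suppose gradient steps w_{t+1} = w_t - η g_t use noisy gradients g_t = ∇f(w_t) + λ_t with ‖λ_t‖ ≤ Λ and η = 1/(2L). Then f(w_{t+1}) - f(w_t) ≤ -(1/(4L))‖∇f(w_t)‖² + (1/(2L))‖∇f(w_t)‖Λ + (1/(4L))Λ², hence if ‖∇f(w_t)‖ ≥ 2Λ then f(w_{t+1}) - f(w_t) ≤ -(1/(16L))‖∇f(w_t)‖². -/
/-!
The descent lemma `f (x + v) ≤ f x + ⟪∇f x, v⟫ + L/2 ‖v‖²` holds because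
`t ↦ f (x + t v) - t ⟪∇f x, v⟫ - L t²/2 ‖v‖²` has derivative
`⟪∇f (x + t v) - ∇f x, v⟫ - L t ‖v‖² ≤ 0` for `t ≥ 0`. For the step `v = -(g + λ)/(2L)` with
`g = ∇f w` its right-hand side is exactly `f w + (‖λ‖² - 2⟪g, λ⟫ - 3‖g‖²)/(8L)`, and
Cauchy–Schwarz with `‖λ‖ ≤ Λ` bounds this by `f w + (Λ² + 2‖g‖Λ - 3‖g‖²)/(8L)`, which implies
both claimed estimates.
-/
open RealInnerProductSpace

section GradientStep

variable {E : Type*} [NormedAddCommGroup E] [InnerProductSpace ℝ E] [CompleteSpace E]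
  {f : E → ℝ} {L : ℝ}

lemma hasDerivAt_comp_add_smul_of_differentiableAt {x v : E} {t : ℝ}
    (hf : DifferentiableAt ℝ f (x + t • v)) :
    HasDerivAt (fun s : ℝ => f (x + s • v)) ⟪gradient f (x + t • v), v⟫ t := by
  have hline : HasDerivAt (fun s : ℝ => x + s • v) v t := by
    simpa using ((hasDerivAt_id t).smul_const v).const_add x
  rw [inner_gradient_left]
  exact hf.hasFDerivAt.comp_hasDerivAt t hline

lemma inner_gradient_add_smul_sub_le
    (hsmooth : ∀ u v, ‖gradient f u - gradient f v‖ ≤ L * ‖u - v‖)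
    (x v : E) {t : ℝ} (ht : 0 ≤ t) :
    ⟪gradient f (x + t • v) - gradient f x, v⟫ ≤ L * t * ‖v‖ ^ 2 :=
  calc ⟪gradient f (x + t • v) - gradient f x, v⟫
      ≤ ‖gradient f (x + t • v) - gradient f x‖ * ‖v‖ := real_inner_le_norm _ _
    _ ≤ L * ‖t • v‖ * ‖v‖ := by
      gcongr
      simpa using hsmooth (x + t • v) x
    _ = L * t * ‖v‖ ^ 2 := by
      rw [norm_smul, Real.norm_of_nonneg ht]; ring

theorem le_add_inner_gradient_add_sq_of_lipschitz_gradient (hdiff : Differentiable ℝ f)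
    (hsmooth : ∀ u v, ‖gradient f u - gradient f v‖ ≤ L * ‖u - v‖) (x v : E) :
    f (x + v) ≤ f x + ⟪gradient f x, v⟫ + L / 2 * ‖v‖ ^ 2 := by
  set φ : ℝ → ℝ := fun t => f (x + t • v) - t * ⟪gradient f x, v⟫ - L / 2 * t ^ 2 * ‖v‖ ^ 2
  have hφ : ∀ t, HasDerivAt φ
      (⟪gradient f (x + t • v), v⟫ - ⟪gradient f x, v⟫ - L * t * ‖v‖ ^ 2) t := by
    intro t
    have hsq := ((hasDerivAt_pow 2 t).const_mul (L / 2)).mul_const (‖v‖ ^ 2)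
    exact (((hasDerivAt_comp_add_smul_of_differentiableAt (hdiff _)).sub
      ((hasDerivAt_id t).mul_const ⟪gradient f x, v⟫)).sub hsq).congr_deriv (by push_cast; ring)
  have hanti : AntitoneOn φ (Set.Ici 0) := by
    refine antitoneOn_of_hasDerivWithinAt_nonpos (convex_Ici 0)
      (fun t _ => (hφ t).continuousAt.continuousWithinAt)
      (fun t _ => (hφ t).hasDerivWithinAt) fun t ht => ?_
    rw [interior_Ici] at ht
    have := inner_gradient_add_smul_sub_le hsmooth x v ht.le
    rw [inner_sub_left] at this
    linarith
  have := hanti Set.self_mem_Ici (Set.mem_Ici.2 zero_le_one) zero_le_one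
  simp only [φ, zero_smul, one_smul, add_zero, zero_mul, one_mul, sub_zero, one_pow] at this
  linarith

theorem sub_le_of_noisy_gradient_step {Λ : ℝ} (hL : 0 < L) (hdiff : Differentiable ℝ f)
    (hsmooth : ∀ u v, ‖gradient f u - gradient f v‖ ≤ L * ‖u - v‖)
    (w lam : E) (hlam : ‖lam‖ ≤ Λ) :
    f (w - (1 / (2 * L)) • (gradient f w + lam)) - f w ≤
      (Λ ^ 2 + 2 * ‖gradient f w‖ * Λ - 3 * ‖gradient f w‖ ^ 2) / (8 * L) := by
  set g := gradient f w
  have hdesc := le_add_inner_gradient_add_sq_of_lipschitz_gradient hdiff hsmooth w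
    (-((1 / (2 * L)) • (g + lam)))
  rw [← sub_eq_add_neg] at hdesc
  have hexpand : ⟪g, -((1 / (2 * L)) • (g + lam))⟫ + L / 2 * ‖-((1 / (2 * L)) • (g + lam))‖ ^ 2
      = (‖lam‖ ^ 2 - 2 * ⟪g, lam⟫ - 3 * ‖g‖ ^ 2) / (8 * L) := by
    rw [inner_neg_right, real_inner_smul_right, inner_add_right, real_inner_self_eq_norm_sq,
      norm_neg, norm_smul, mul_pow, norm_add_sq_real, Real.norm_of_nonneg (by positivity)]
    field_simp
    ring
  have hinner : -(‖g‖ * Λ) ≤ ⟪g, lam⟫ :=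
    calc -(‖g‖ * Λ) ≤ -(‖g‖ * ‖lam‖) := by gcongr
      _ ≤ ⟪g, lam⟫ := neg_le_of_abs_le (abs_real_inner_le_norm g lam)
  have hlam_sq : ‖lam‖ ^ 2 ≤ Λ ^ 2 := pow_le_pow_left₀ (norm_nonneg lam) hlam 2
  calc f (w - (1 / (2 * L)) • (g + lam)) - f w
      ≤ (‖lam‖ ^ 2 - 2 * ⟪g, lam⟫ - 3 * ‖g‖ ^ 2) / (8 * L) := by linarith
    _ ≤ (Λ ^ 2 + 2 * ‖g‖ * Λ - 3 * ‖g‖ ^ 2) / (8 * L) := by gcongr; linarith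

end GradientStep

theorem stmt15_general {n : ℕ} (f : EuclideanSpace ℝ (Fin n) → ℝ) (L Λ : ℝ)
    (hL : 0 < L)
    (hdiff : Differentiable ℝ f)
    (hsmooth : ∀ u v, ‖gradient f u - gradient f v‖ ≤ L * ‖u - v‖)
    (w lam : EuclideanSpace ℝ (Fin n)) (hlam : ‖lam‖ ≤ Λ) :
    f (w - (1 / (2 * L)) • (gradient f w + lam)) - f w ≤
        -(1 / (4 * L)) * ‖gradient f w‖ ^ 2 + 1 / (2 * L) * ‖gradient f w‖ * Λ +
          1 / (4 * L) * Λ ^ 2 ∧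
      (‖gradient f w‖ ≥ 2 * Λ →
        f (w - (1 / (2 * L)) • (gradient f w + lam)) - f w ≤
          -(1 / (16 * L)) * ‖gradient f w‖ ^ 2) := by
  have hstep := sub_le_of_noisy_gradient_step hL hdiff hsmooth w lam hlam
  have hΛ : 0 ≤ Λ := (norm_nonneg lam).trans hlam
  set G := ‖gradient f w‖
  refine ⟨hstep.trans ?_, fun hbig => hstep.trans ?_⟩
  · field_simp
    nlinarith [sq_nonneg (G + Λ)]
  · field_simp
    nlinarith [mul_nonneg hΛ (sub_nonneg.2 hbig)]

theorem stmt15 {n : ℕ} (f : EuclideanSpace ℝ (Fin n) → ℝ) (L Λ : ℝ)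
    (wstar : EuclideanSpace ℝ (Fin n)) (hL : 0 < L)
    (hconv : ConvexOn ℝ Set.univ f) (hdiff : Differentiable ℝ f)
    (hsmooth : ∀ u v, ‖gradient f u - gradient f v‖ ≤ L * ‖u - v‖)
    (hmin : ∀ w, f wstar ≤ f w)
    (w lam : EuclideanSpace ℝ (Fin n)) (hlam : ‖lam‖ ≤ Λ) :
    f (w - (1 / (2 * L)) • (gradient f w + lam)) - f w ≤
        -(1 / (4 * L)) * ‖gradient f w‖ ^ 2 + 1 / (2 * L) * ‖gradient f w‖ * Λ +
          1 / (4 * L) * Λ ^ 2 ∧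
      (‖gradient f w‖ ≥ 2 * Λ →
        f (w - (1 / (2 * L)) • (gradient f w + lam)) - f w ≤
          -(1 / (16 * L)) * ‖gradient f w‖ ^ 2) :=
  stmt15_general f L Λ hL hdiff hsmooth w lam hlam
end
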